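/- arXiv:0905.3255 — 3 statements merged into one kernel-verified Lean document; each statement's English description precedes it below -/
import Mathlib

section
/- Let F ∈ k[x,y,z] be homogeneous of degree d, and let G₁, G₂ ∈ k[x,y,z] be homogeneous of degrees δ₁, δ₂. With R(F,G) denoting the conchoidal resultant (the resultant in (λ,μ) of F((μ-λ)x,(μ-λ)y,μz) and G(λx,λy,μz)), one has R(F, G₁·G₂) = c · R(F,G₁) · R(F,G₂) for some nonzero constant c ∈ k. -/
/-! The conchoidal resultant is a univariate resultant in `λ` whose second argument
`G(λx, λy, z)` is multiplicative in `G`. The Sylvester matrix used here lists descending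
coefficients in rows, so it is the transpose of Mathlib's Sylvester matrix of the reversed
polynomials; reversal is multiplicative for polynomials of bounded degree, and the resultant is
multiplicative in each argument, so the identity holds with `c = 1`. -/

open MvPolynomial

/-- The Sylvester matrix of two univariate polynomials `f`, `g`, regarded as
forms of (declared) degrees `d` and `e` respectively.  Its first `e` rows carry
the shifted coefficient sequence `f.coeff d, …, f.coeff 0`, and the remaining
`d` rows the sequence `g.coeff e, …, g.coeff 0`. -/
noncomputable def sylvester {R : Type*} [CommRing R] (d e : ℕ)
    (f g : Polynomial R) : Matrix (Fin (e + d)) (Fin (e + d)) R :=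
  Matrix.of fun i j =>
    if (i : ℕ) < e then
      (if (i : ℕ) ≤ (j : ℕ) ∧ (j : ℕ) ≤ (i : ℕ) + d then f.coeff (d + i - j) else 0)
    else
      (if (i : ℕ) - e ≤ (j : ℕ) ∧ (j : ℕ) ≤ ((i : ℕ) - e) + e then
        g.coeff (e + ((i : ℕ) - e) - j) else 0)

/-- The resultant of `f` and `g` regarded as forms of degrees `d` and `e`. -/
noncomputable def resultantD {R : Type*} [CommRing R] (d e : ℕ)
    (f g : Polynomial R) : R :=
  (sylvester d e f g).det

/-- `F((μ-λ)x, (μ-λ)y, μz)` as a binary form in `(λ,μ)`, dehomogenized at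
`μ = 1`: the polynomial `F((1-λ)x, (1-λ)y, z)` in the variable `λ` with
coefficients in `k[x,y,z]`. -/
noncomputable def conchSubB {k : Type*} [CommRing k] (F : MvPolynomial (Fin 3) k) :
    Polynomial (MvPolynomial (Fin 3) k) :=
  MvPolynomial.aeval
    ![(1 - Polynomial.X) * Polynomial.C (X 0),
      (1 - Polynomial.X) * Polynomial.C (X 1),
      Polynomial.C (X 2)] F

/-- `G(λx, λy, μz)` dehomogenized at `μ = 1`: the polynomial `G(λx, λy, z)`
in the variable `λ` with coefficients in `k[x,y,z]`. -/
noncomputable def conchSubC {k : Type*} [CommRing k] (G : MvPolynomial (Fin 3) k) :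
    Polynomial (MvPolynomial (Fin 3) k) :=
  MvPolynomial.aeval
    ![Polynomial.X * Polynomial.C (X 0),
      Polynomial.X * Polynomial.C (X 1),
      Polynomial.C (X 2)] G

/-- The conchoidal resultant `R(F,G)`: the resultant, with respect to the
homogeneous variables `(λ,μ)`, of `F((μ-λ)x,(μ-λ)y,μz)` (a form of degree `d`)
and `G(λx,λy,μz)` (a form of degree `e`). -/
noncomputable def conchRes {k : Type*} [CommRing k] (d e : ℕ)
    (F G : MvPolynomial (Fin 3) k) : MvPolynomial (Fin 3) k :=
  resultantD d e (conchSubB F) (conchSubC G)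

open scoped Matrix

namespace Polynomial

theorem natDegree_reflect_le_of_le {R : Type*} [Semiring R] {N : ℕ} {p : R[X]}
    (h : p.natDegree ≤ N) : (p.reflect N).natDegree ≤ N :=
  natDegree_reflect_le.trans (max_le le_rfl h)

variable {R : Type*} [CommRing R]

theorem sylvester_reflect_transpose (d e : ℕ) (f g : R[X]) :
    (sylvester (reflect e g) (reflect d f) e d)ᵀ = _root_.sylvester d e f g := by
  ext i j
  induction i using Fin.addCases with
  | left i =>
    simp only [sylvester, _root_.sylvester, Matrix.transpose_apply, Matrix.of_apply,
      Fin.addCases_left, Fin.val_castAdd, Set.mem_Icc, coeff_reflect, if_pos i.isLt]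
    split_ifs with h
    · rw [revAt_le (by omega)]
      congr 1
      omega
    · rfl
  | right i =>
    simp only [sylvester, _root_.sylvester, Matrix.transpose_apply, Matrix.of_apply,
      Fin.addCases_right, Fin.val_natAdd, Set.mem_Icc, coeff_reflect,
      if_neg (Nat.not_lt.mpr (Nat.le_add_right e i)), Nat.add_sub_cancel_left]
    split_ifs with h
    · rw [revAt_le (by omega)]
      congr 1
      omega
    · rfl

-- Padding the declared degree of `g` by `k` multiplies the resultant by `f.coeff m ^ k`.
theorem resultant_mul_right_of_natDegree_le (f g₁ g₂ : R[X]) {m n₁ n₂ : ℕ}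
    (hf : f.natDegree ≤ m) (h₁ : g₁.natDegree ≤ n₁) (h₂ : g₂.natDegree ≤ n₂) :
    resultant f (g₁ * g₂) m (n₁ + n₂) = resultant f g₁ m n₁ * resultant f g₂ m n₂ := by
  obtain ⟨k₁, rfl⟩ := Nat.exists_eq_add_of_le h₁
  obtain ⟨k₂, rfl⟩ := Nat.exists_eq_add_of_le h₂
  rw [add_add_add_comm, resultant_add_right_deg _ _ _ _ _ natDegree_mul_le,
    resultant_mul_right _ _ _ _ hf, resultant_add_right_deg _ _ _ _ _ le_rfl,
    resultant_add_right_deg _ _ _ _ _ le_rfl]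
  ring

theorem resultant_mul_left_of_natDegree_le (f₁ f₂ g : R[X]) {m₁ m₂ n : ℕ}
    (h₁ : f₁.natDegree ≤ m₁) (h₂ : f₂.natDegree ≤ m₂) (hg : g.natDegree ≤ n) :
    resultant (f₁ * f₂) g (m₁ + m₂) n = resultant f₁ g m₁ n * resultant f₂ g m₂ n := by
  rw [resultant_comm, resultant_mul_right_of_natDegree_le _ _ _ hg h₁ h₂, resultant_comm f₁,
    resultant_comm f₂, add_mul, pow_add]
  ring

end Polynomial

theorem resultantD_eq_resultant_reflect {R : Type*} [CommRing R] (d e : ℕ) (f g : Polynomial R) :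
    resultantD d e f g = (g.reflect e).resultant (f.reflect d) e d := by
  rw [resultantD, ← Polynomial.sylvester_reflect_transpose, Matrix.det_transpose,
    Polynomial.resultant]

theorem resultantD_mul_right {R : Type*} [CommRing R] {d e₁ e₂ : ℕ} {f g₁ g₂ : Polynomial R}
    (hf : f.natDegree ≤ d) (h₁ : g₁.natDegree ≤ e₁) (h₂ : g₂.natDegree ≤ e₂) :
    resultantD d (e₁ + e₂) f (g₁ * g₂) = resultantD d e₁ f g₁ * resultantD d e₂ f g₂ := by
  rw [resultantD_eq_resultant_reflect, resultantD_eq_resultant_reflect,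
    resultantD_eq_resultant_reflect, Polynomial.reflect_mul _ _ h₁ h₂]
  exact Polynomial.resultant_mul_left_of_natDegree_le _ _ _
    (Polynomial.natDegree_reflect_le_of_le h₁) (Polynomial.natDegree_reflect_le_of_le h₂)
    (Polynomial.natDegree_reflect_le_of_le hf)

theorem MvPolynomial.natDegree_aeval_le_totalDegree {R S σ : Type*} [CommSemiring R]
    [CommSemiring S] [Algebra R S] (P : MvPolynomial σ R) {v : σ → Polynomial S}
    (hv : ∀ i, (v i).natDegree ≤ 1) : (aeval v P).natDegree ≤ P.totalDegree := by
  rw [aeval_def, eval₂_eq]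
  refine Polynomial.natDegree_sum_le_of_forall_le _ _ fun m hm => ?_
  calc (algebraMap R (Polynomial S) (P.coeff m) * ∏ i ∈ m.support, v i ^ m i).natDegree
      ≤ ∑ i ∈ m.support, (v i ^ m i).natDegree :=
        Polynomial.natDegree_C_mul_le _ _ |>.trans (Polynomial.natDegree_prod_le _ _)
    _ ≤ ∑ i ∈ m.support, m i := Finset.sum_le_sum fun i _ =>
        Polynomial.natDegree_pow_le_of_le _ (hv i) |>.trans (mul_one _).le
    _ ≤ P.totalDegree := le_totalDegree hm

theorem natDegree_conchSubB_le {k : Type*} [CommRing k] {d : ℕ} {F : MvPolynomial (Fin 3) k}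
    (hF : F.IsHomogeneous d) : (conchSubB F).natDegree ≤ d := by
  refine (F.natDegree_aeval_le_totalDegree fun i => ?_).trans hF.totalDegree_le
  have h : ((1 : Polynomial (MvPolynomial (Fin 3) k)) - Polynomial.X).natDegree ≤ 1 :=
    (Polynomial.natDegree_sub_le _ _).trans (max_le (by simp) Polynomial.natDegree_X_le)
  fin_cases i
  exacts [(Polynomial.natDegree_mul_C_le _ _).trans h, (Polynomial.natDegree_mul_C_le _ _).trans h,
    by simp]

theorem natDegree_conchSubC_le {k : Type*} [CommRing k] {d : ℕ} {G : MvPolynomial (Fin 3) k}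
    (hG : G.IsHomogeneous d) : (conchSubC G).natDegree ≤ d := by
  refine (G.natDegree_aeval_le_totalDegree fun i => ?_).trans hG.totalDegree_le
  fin_cases i
  exacts [(Polynomial.natDegree_mul_C_le _ _).trans Polynomial.natDegree_X_le,
    (Polynomial.natDegree_mul_C_le _ _).trans Polynomial.natDegree_X_le, by simp]

/-- multiplicativity of the conchoidal resultant in the second
argument: `R(F, G₁G₂) = c · R(F,G₁) · R(F,G₂)` for a nonzero constant `c`. -/
theorem conchRes_mul_right {k : Type*} [Field k] (d δ₁ δ₂ : ℕ)
    (F G₁ G₂ : MvPolynomial (Fin 3) k)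
    (hF : F.IsHomogeneous d) (hG₁ : G₁.IsHomogeneous δ₁) (hG₂ : G₂.IsHomogeneous δ₂) :
    ∃ c : k, c ≠ 0 ∧
      conchRes d (δ₁ + δ₂) F (G₁ * G₂) =
        MvPolynomial.C c * (conchRes d δ₁ F G₁ * conchRes d δ₂ F G₂) := by
  refine ⟨1, one_ne_zero, ?_⟩
  rw [map_one, one_mul, conchRes, conchSubC, map_mul]
  exact resultantD_mul_right (natDegree_conchSubB_le hF) (natDegree_conchSubC_le hG₁)
    (natDegree_conchSubC_le hG₂)
end

section
/- Let F = ax + by + cz be a linear form and G ∈ k[x,y,z] homogeneous of degree δ ≥ 1. Then the conchoidal resultant R(F,G) (the resultant in (λ,μ) of F((μ-λ)x,(μ-λ)y,μz) and G(λx,λy,μz)) equals, up to sign, G(x(ax+by+cz), y(ax+by+cz), (ax+by)z). -/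
/-!
Dehomogenized at `μ = 1`, `F((μ-λ)x, (μ-λ)y, μz)` is the linear polynomial `L - Nλ` with
`L = ax + by + cz` and `N = ax + by`. The resultant of a linear form with a form `g` of degree `δ`
is `g` evaluated at the root of the linear form, here `(λ : μ) = (-L : -N)`, so
`R(F, G) = G(-Lx, -Ly, -Nz) = (-1)^δ G(Lx, Ly, Nz)` by homogeneity of `G`.
-/

open MvPolynomial

section Sylvester

variable {R : Type*} [CommRing R] (f g : Polynomial R)

lemma sylvester_one_submatrix_succ (e : ℕ) :
    (sylvester 1 (e + 1) f g).submatrix Fin.succ Fin.succ = sylvester 1 e f g := by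
  ext i j
  simp only [Matrix.submatrix_apply, sylvester, Matrix.of_apply, Fin.val_succ]
  split_ifs <;> first | rfl | (exfalso; omega) | (congr 1; omega)

lemma det_sylvester_one_submatrix_last (e : ℕ) :
    ((sylvester 1 (e + 1) f g).submatrix (Fin.last (e + 1)).succAbove Fin.succ).det
      = f.coeff 0 ^ (e + 1) := by
  rw [Matrix.det_of_isLowerTriangular]
  · have hdiag (i : Fin (e + 1)) : sylvester 1 (e + 1) f g i.castSucc i.succ = f.coeff 0 := by
      simp only [sylvester, Matrix.of_apply, Fin.val_castSucc, Fin.val_succ]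
      split_ifs <;> first | (exfalso; omega) | (congr 1; omega)
    simp [hdiag]
  · intro i j (hij : (i : ℕ) < j)
    simp only [Matrix.submatrix_apply, Fin.succAbove_last, sylvester, Matrix.of_apply,
      Fin.val_castSucc, Fin.val_succ]
    split_ifs <;> first | rfl | (exfalso; omega)

lemma resultantD_one_zero : resultantD 1 0 f g = g.coeff 0 := by
  simp [resultantD, sylvester]

/-- Laplace expansion along the first column: only its top entry `f.coeff 1` and its bottom
entry `g.coeff (e + 1)` are nonzero, and the latter's minor is triangular. -/
lemma resultantD_one_succ (e : ℕ) :
    resultantD 1 (e + 1) f g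
      = f.coeff 1 * resultantD 1 e f g + g.coeff (e + 1) * (-f.coeff 0) ^ (e + 1) := by
  have htop : sylvester 1 (e + 1) f g 0 0 = f.coeff 1 := by simp [sylvester]
  have hbottom : sylvester 1 (e + 1) f g (Fin.last (e + 1)) 0 = g.coeff (e + 1) := by
    simp [sylvester]
  have hmiddle (i : Fin (e + 1)) (hi : i ≠ Fin.last e) : sylvester 1 (e + 1) f g i.succ 0 = 0 := by
    simp [sylvester, Fin.val_lt_last hi]
  rw [resultantD, Matrix.det_succ_column_zero, Fin.sum_univ_succ,
    Finset.sum_eq_single (Fin.last e) (fun i _ hi => by simp [hmiddle i hi]) (by simp),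
    Fin.succ_last, htop, hbottom, Fin.succAbove_zero, sylvester_one_submatrix_succ,
    det_sylvester_one_submatrix_last, resultantD, neg_pow, Fin.val_last]
  simp only [Fin.val_zero, pow_zero, one_mul, Nat.succ_eq_add_one]
  ring

/-- The resultant with a linear form `f₁λ + f₀μ` is `g` evaluated at its root `(-f₀ : f₁)`. -/
lemma resultantD_one_eq_sum (e : ℕ) :
    resultantD 1 e f g
      = ∑ m ∈ Finset.range (e + 1), g.coeff m * (-f.coeff 0) ^ m * f.coeff 1 ^ (e - m) := by
  induction e with
  | zero => simp [resultantD_one_zero]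
  | succ e ih =>
    rw [resultantD_one_succ, ih, Finset.sum_range_succ _ (e + 1), Nat.sub_self, pow_zero,
      mul_one, Finset.mul_sum]
    congr 1
    refine Finset.sum_congr rfl fun m hm => ?_
    rw [Nat.sub_add_comm (Finset.mem_range_succ_iff.mp hm), pow_succ]
    ring

end Sylvester

lemma sum_mul_neg_pow_mul_neg_pow {R : Type*} [CommRing R] (c : ℕ → R) (p q : R) (n : ℕ) :
    ∑ m ∈ Finset.range (n + 1), c m * (-p) ^ m * (-q) ^ (n - m)
      = (-1) ^ n * ∑ m ∈ Finset.range (n + 1), c m * p ^ m * q ^ (n - m) := by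
  rw [Finset.mul_sum]
  refine Finset.sum_congr rfl fun m hm => ?_
  have hsign : (-1 : R) ^ n = (-1) ^ m * (-1) ^ (n - m) := by
    rw [← pow_add, Nat.add_sub_cancel' (Finset.mem_range_succ_iff.mp hm)]
  rw [neg_pow p, neg_pow q, hsign]
  ring

section Conchoid

variable {k : Type*} [CommRing k]

lemma aeval_monomial_fin_three {S : Type*} [CommRing S] [Algebra k S] (v : Fin 3 → S)
    (s : Fin 3 →₀ ℕ) (r : k) :
    aeval v (monomial s r) = algebraMap k S r * v 0 ^ s 0 * v 1 ^ s 1 * v 2 ^ s 2 := by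
  rw [aeval_monomial, Finsupp.prod_fintype _ _ (fun _ => pow_zero _), Fin.prod_univ_three]
  ring

lemma monomial_fin_three (s : Fin 3 →₀ ℕ) (r : k) :
    monomial s r = C r * X 0 ^ s 0 * X 1 ^ s 1 * X 2 ^ s 2 := by
  simpa using aeval_monomial_fin_three (X : Fin 3 → MvPolynomial (Fin 3) k) s r

lemma conchSubC_monomial (s : Fin 3 →₀ ℕ) (r : k) :
    conchSubC (monomial s r) = Polynomial.C (monomial s r) * Polynomial.X ^ (s 0 + s 1) := by
  rw [conchSubC, aeval_monomial_fin_three, monomial_fin_three]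
  simp only [Matrix.cons_val_zero, Matrix.cons_val_one, Matrix.cons_val_two, Matrix.head_cons,
    Matrix.tail_cons, Polynomial.algebraMap_apply, algebraMap_eq, map_mul, map_pow, mul_pow,
    pow_add]
  ring

lemma sum_coeff_conchSubC_monomial_mul_pow {δ : ℕ} (s : Fin 3 →₀ ℕ)
    (hs : s 0 + s 1 + s 2 = δ) (r : k) (p q : MvPolynomial (Fin 3) k) :
    ∑ m ∈ Finset.range (δ + 1), (conchSubC (monomial s r)).coeff m * p ^ m * q ^ (δ - m)
      = aeval ![X 0 * p, X 1 * p, q * X 2] (monomial s r) := by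
  simp only [conchSubC_monomial, Polynomial.coeff_C_mul_X_pow]
  rw [Finset.sum_eq_single_of_mem (s 0 + s 1) (Finset.mem_range_succ_iff.mpr (by omega))
    (fun m _ hm => by simp [hm]), if_pos rfl, show δ - (s 0 + s 1) = s 2 by omega,
    aeval_monomial_fin_three, monomial_fin_three]
  simp only [Matrix.cons_val_zero, Matrix.cons_val_one, Matrix.cons_val_two, Matrix.head_cons,
    Matrix.tail_cons, algebraMap_eq, mul_pow]
  ring

theorem MvPolynomial.IsHomogeneous.sum_coeff_conchSubC_mul_pow {δ : ℕ}
    {G : MvPolynomial (Fin 3) k} (hG : G.IsHomogeneous δ) (p q : MvPolynomial (Fin 3) k) :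
    ∑ m ∈ Finset.range (δ + 1), (conchSubC G).coeff m * p ^ m * q ^ (δ - m)
      = MvPolynomial.aeval ![X 0 * p, X 1 * p, q * X 2] G := by
  conv_lhs => rw [G.as_sum]
  conv_rhs => rw [G.as_sum]
  simp only [conchSubC, map_sum, Polynomial.finsetSum_coeff, Finset.sum_mul]
  rw [Finset.sum_comm]
  refine Finset.sum_congr rfl fun s hs => sum_coeff_conchSubC_monomial_mul_pow s ?_ _ p q
  have := hG (mem_support_iff.mp hs)
  simpa [Finsupp.weight_apply, Finsupp.sum_fintype, Fin.sum_univ_three, add_assoc] using this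

lemma conchSubB_linear (a b c : k) :
    conchSubB (C a * X 0 + C b * X 1 + C c * X 2)
      = Polynomial.C (C a * X 0 + C b * X 1 + C c * X 2)
        - Polynomial.C (C a * X 0 + C b * X 1) * Polynomial.X := by
  simp only [conchSubB, map_add, map_mul, aeval_C, aeval_X, Matrix.cons_val_zero,
    Matrix.cons_val_one, Matrix.cons_val_two, Matrix.head_cons, Matrix.tail_cons,
    Polynomial.algebraMap_apply, algebraMap_eq]
  ring

end Conchoid

theorem conchRes_line_general {k : Type*} [Field k] (a b c : k) (δ : ℕ)
    (G : MvPolynomial (Fin 3) k) (hG : G.IsHomogeneous δ) :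
    conchRes 1 δ
        (MvPolynomial.C a * X 0 + MvPolynomial.C b * X 1 + MvPolynomial.C c * X 2) G =
      MvPolynomial.aeval
        ![X 0 * (MvPolynomial.C a * X 0 + MvPolynomial.C b * X 1 + MvPolynomial.C c * X 2),
          X 1 * (MvPolynomial.C a * X 0 + MvPolynomial.C b * X 1 + MvPolynomial.C c * X 2),
          (MvPolynomial.C a * X 0 + MvPolynomial.C b * X 1) * X 2] G ∨
    conchRes 1 δ
        (MvPolynomial.C a * X 0 + MvPolynomial.C b * X 1 + MvPolynomial.C c * X 2) G =
      - MvPolynomial.aeval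
        ![X 0 * (MvPolynomial.C a * X 0 + MvPolynomial.C b * X 1 + MvPolynomial.C c * X 2),
          X 1 * (MvPolynomial.C a * X 0 + MvPolynomial.C b * X 1 + MvPolynomial.C c * X 2),
          (MvPolynomial.C a * X 0 + MvPolynomial.C b * X 1) * X 2] G := by
  have hres : conchRes 1 δ (C a * X 0 + C b * X 1 + C c * X 2) G
      = (-1) ^ δ * aeval ![X 0 * (C a * X 0 + C b * X 1 + C c * X 2),
          X 1 * (C a * X 0 + C b * X 1 + C c * X 2), (C a * X 0 + C b * X 1) * X 2] G := by
    rw [conchRes, resultantD_one_eq_sum, ← hG.sum_coeff_conchSubC_mul_pow,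
      ← sum_mul_neg_pow_mul_neg_pow, conchSubB_linear]
    simp [Polynomial.coeff_C]
  rcases neg_one_pow_eq_or (MvPolynomial (Fin 3) k) δ with h | h
  · exact Or.inl (by rw [hres, h, one_mul])
  · exact Or.inr (by rw [hres, h, neg_one_mul])

/-- the conchoid with respect to a line `F = ax + by + cz`:
for `G` homogeneous of degree `δ ≥ 1`, the conchoidal resultant `R(F,G)`
equals, up to sign, `G(x(ax+by+cz), y(ax+by+cz), (ax+by)z)`. -/
theorem conchRes_line {k : Type*} [Field k] (a b c : k) (δ : ℕ) (hδ : 1 ≤ δ)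
    (G : MvPolynomial (Fin 3) k) (hG : G.IsHomogeneous δ) :
    conchRes 1 δ
        (MvPolynomial.C a * X 0 + MvPolynomial.C b * X 1 + MvPolynomial.C c * X 2) G =
      MvPolynomial.aeval
        ![X 0 * (MvPolynomial.C a * X 0 + MvPolynomial.C b * X 1 + MvPolynomial.C c * X 2),
          X 1 * (MvPolynomial.C a * X 0 + MvPolynomial.C b * X 1 + MvPolynomial.C c * X 2),
          (MvPolynomial.C a * X 0 + MvPolynomial.C b * X 1) * X 2] G ∨
    conchRes 1 δ
        (MvPolynomial.C a * X 0 + MvPolynomial.C b * X 1 + MvPolynomial.C c * X 2) G =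
      - MvPolynomial.aeval
        ![X 0 * (MvPolynomial.C a * X 0 + MvPolynomial.C b * X 1 + MvPolynomial.C c * X 2),
          X 1 * (MvPolynomial.C a * X 0 + MvPolynomial.C b * X 1 + MvPolynomial.C c * X 2),
          (MvPolynomial.C a * X 0 + MvPolynomial.C b * X 1) * X 2] G :=
  conchRes_line_general a b c δ G hG
end

section
/- Let B ⊂ ℙ² be defined by F = 0 with F homogeneous of degree d, and let W_B ⊂ ℙ²×ℙ² be defined by F(zX-xZ, zY-yZ, zZ) = 0, xY - yX = 0, with π₁ the first projection. If P = [a:b:0] satisfies F(a,b,0) = 0, then π₁⁻¹(P) is the rational curve { [a:b:0; λa:λb:μ] : [λ:μ] ∈ ℙ¹ }, which maps isomorphically under the second projection π₂ to the line joining A = [0:0:1] and P. -/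
open MvPolynomial

/-!
Over a point `P = [a:b:0]` of `B`, the first equation of `W_B` becomes
`F(-Z·(a, b, 0)) = (-Z)^d F(a, b, 0) = 0` by homogeneity, so it holds on the whole fibre, which is
therefore cut out by `bX = aY` alone; as `(a, b) ≠ 0`, that line is `{[λa : λb : μ]}`.
-/
theorem MvPolynomial.IsHomogeneous.eval_smul {σ R : Type*} [CommSemiring R]
    {F : MvPolynomial σ R} {d : ℕ} (hF : F.IsHomogeneous d) (c : R) (x : σ → R) :
    eval (c • x) F = c ^ d * eval x F := by
  rw [eval_eq, eval_eq, Finset.mul_sum]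
  refine Finset.sum_congr rfl fun m hm => ?_
  have hdeg : ∑ i ∈ m.support, m i = d := by
    simpa [Finsupp.weight_apply, Finsupp.sum] using hF (mem_support_iff.mp hm)
  simp only [Pi.smul_apply, smul_eq_mul, mul_pow, Finset.prod_mul_distrib,
    Finset.prod_pow_eq_pow_sum, hdeg]
  ring

theorem exists_eq_mul_of_mul_sub_mul_eq_zero {k : Type*} [Field k] {a b X Y : k}
    (hab : ¬ (a = 0 ∧ b = 0)) (h : b * X - a * Y = 0) : ∃ l, X = l * a ∧ Y = l * b := by
  rcases eq_or_ne a 0 with rfl | ha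
  · have hb : b ≠ 0 := fun hb => hab ⟨rfl, hb⟩
    refine ⟨Y / b, ?_, by field_simp⟩
    simpa [hb] using h
  · refine ⟨X / a, by field_simp, ?_⟩
    field_simp
    linear_combination -h

/-- if `P = [a:b:0]` lies on `B` (i.e. `F(a,b,0) = 0`), the fiber
`π₁⁻¹(P)` of `W_B` over `P` is the rational curve `{[a:b:0; λa:λb:μ]}`, which
is exactly the line `bX - aY = 0` joining `A = [0:0:1]` and `P` under the
second projection. -/
theorem WB_fiber_at_infinity_on_B {k : Type*} [Field k] (d : ℕ)
    (F : MvPolynomial (Fin 3) k) (hF : F.IsHomogeneous d)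
    (a b : k) (hab : ¬ (a = 0 ∧ b = 0))
    (hP : MvPolynomial.eval (![a, b, 0] : Fin 3 → k) F = 0) :
    ∀ X' Y' Z' : k, ¬ (X' = 0 ∧ Y' = 0 ∧ Z' = 0) →
      ((MvPolynomial.eval
          (![0 * X' - a * Z', 0 * Y' - b * Z', 0 * Z'] : Fin 3 → k) F = 0 ∧
        a * Y' - b * X' = 0) ↔
        ∃ l m : k, ¬ (l = 0 ∧ m = 0) ∧ X' = l * a ∧ Y' = l * b ∧ Z' = m) ∧
      ((∃ l m : k, ¬ (l = 0 ∧ m = 0) ∧ X' = l * a ∧ Y' = l * b ∧ Z' = m) ↔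
        b * X' - a * Y' = 0) := by
  intro X Y Z hXYZ
  have hline : (∃ l m : k, ¬ (l = 0 ∧ m = 0) ∧ X = l * a ∧ Y = l * b ∧ Z = m) ↔
      b * X - a * Y = 0 := by
    refine ⟨fun ⟨l, m, _, hX, hY, _⟩ => by rw [hX, hY]; ring, fun h => ?_⟩
    obtain ⟨l, hX, hY⟩ := exists_eq_mul_of_mul_sub_mul_eq_zero hab h
    refine ⟨l, Z, fun ⟨hl, hZ⟩ => hXYZ ⟨?_, ?_, hZ⟩, hX, hY, rfl⟩ <;> simp [hX, hY, hl]
  have hW : eval ![0 * X - a * Z, 0 * Y - b * Z, 0 * Z] F = 0 := by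
    have hpt : ![0 * X - a * Z, 0 * Y - b * Z, 0 * Z] = (-Z) • ![a, b, 0] := by
      ext i; fin_cases i <;> simp [mul_comm]
    rw [hpt, hF.eval_smul, hP, mul_zero]
  refine ⟨⟨fun h => hline.2 (by linear_combination -h.2), fun h => ⟨hW, ?_⟩⟩, hline⟩
  linear_combination -hline.1 h
end
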